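/- arXiv:2010.05489 — 3 statements merged into one kernel-verified Lean document; each statement's English description precedes it below -/
import Mathlib

section
/- Common eventual value of a finite family of exchanged counters (combines the cores of Lemmas 3 and 4): let I be a nonempty finite index set and for each i ∈ I let a i : ℕ → ℕ be a nondecreasing sequence, such that for all i, j ∈ I and every t there exists t' ≥ t with a j t' ≥ a i t (pairwise exchange property). If a i₀ is bounded for some i₀ ∈ I, then there exist M : ℕ and T : ℕ such that a i t = M for every i ∈ I and every t ≥ T. -/
/-- A monotone sequence of naturals bounded above stabilizes. -/
lemma stab_aux (M : ℕ) : ∀ (f : ℕ → ℕ), Monotone f → (∀ t, f t ≤ M) →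
    ∃ T, ∀ t ≥ T, f t = f T := by
  induction M with
  | zero =>
    intro f _ hb
    exact ⟨0, fun t _ => by have := hb t; have := hb 0; omega⟩
  | succ M ih =>
    intro f hf hb
    by_cases h : ∃ t, f t = M + 1
    · obtain ⟨t₀, ht₀⟩ := h
      refine ⟨t₀, fun t ht => ?_⟩
      have := hf ht
      have := hb t
      omega
    · push_neg at h
      exact ih f hf (fun t => by have := hb t; have := h t; omega)

/-- Common eventual value of a finite family of exchanged counters
(combines the cores of Lemmas 3 and 4). -/
theorem common_eventual_value {ι : Type} (I : Finset ι) (hI : I.Nonempty)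
    (a : ι → ℕ → ℕ) (hmono : ∀ i ∈ I, Monotone (a i))
    (hexch : ∀ i ∈ I, ∀ j ∈ I, ∀ t, ∃ t' ≥ t, a j t' ≥ a i t)
    (i₀ : ι) (hi₀ : i₀ ∈ I) (M₀ : ℕ) (hbd : ∀ t, a i₀ t ≤ M₀) :
    ∃ M T, ∀ i ∈ I, ∀ t ≥ T, a i t = M := by
  classical
  -- every sequence is bounded by M₀
  have hbd' : ∀ i ∈ I, ∀ t, a i t ≤ M₀ := by
    intro i hi t
    obtain ⟨t', _, h⟩ := hexch i hi i₀ hi₀ t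
    exact h.trans (hbd t')
  -- stabilization time for each i
  have hstab : ∀ i ∈ I, ∃ T, ∀ t ≥ T, a i t = a i T := fun i hi =>
    stab_aux M₀ (a i) (hmono i hi) (hbd' i hi)
  choose! T hT using hstab
  set Tm : ℕ := I.sup T with hTm
  have hTle : ∀ i ∈ I, T i ≤ Tm := fun i hi => Finset.le_sup hi
  -- each sequence equals its limit beyond Tm
  have hconst : ∀ i ∈ I, ∀ t ≥ Tm, a i t = a i (T i) := by
    intro i hi t ht
    exact hT i hi t (le_trans (hTle i hi) ht)
  -- limits are pairwise equal
  have hle : ∀ i ∈ I, ∀ j ∈ I, a i (T i) ≤ a j (T j) := by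
    intro i hi j hj
    obtain ⟨t', ht', h⟩ := hexch i hi j hj (T i)
    calc a i (T i) ≤ a j t' := h
      _ ≤ a j (max t' (T j)) := hmono j hj (le_max_left _ _)
      _ = a j (T j) := hT j hj _ (le_max_right _ _)
  refine ⟨a i₀ (T i₀), Tm, fun i hi t ht => ?_⟩
  rw [hconst i hi t ht]
  exact le_antisymm (hle i hi i₀ hi₀) (hle i₀ hi₀ i hi)
end

section
/- Eventual leadership from counter behavior (conclusion of Theorem 2, Closure of the self-stabilizing Ω failure detector). Let n ≥ 1, let C be a nonempty Finset of Fin n (the correct processors), and let PL be a nonempty Finset with PL ⊆ C (the potential leaders). For each i ∈ C let c i : ℕ → Fin n → ℕ give processor i's counter array over time. Suppose there exists M : Fin n → ℕ such that: (i) for every k ∈ PL and every i ∈ C, eventually (for all sufficiently large t) c i t k = M k; and (ii) for every k ∉ PL and every i ∈ C, the sequence t ↦ c i t k tends to infinity. Then there exists ℓ ∈ PL such that eventually, for every i ∈ C and every k ≠ ℓ, the pair (c i t ℓ, ℓ) is lexicographically smaller than (c i t k, k); i.e., all correct processors eventually and permanently return the same correct leader ℓ from the leader() operation. -/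
open Filter

/-! The potential leader with the smallest pair `(M k, k)` is the leader: eventually every processor
sees the stable values `M k` on the potential leaders, where ties are impossible because the
identifiers differ, and counters above `M ℓ` on all other processors, since those grow without
bound. -/

section LexLeader

variable {ι α : Type*} [LinearOrder ι] [LinearOrder α]

theorem toLex_lt_of_le_of_ne {a b : α} {i j : ι} (hle : toLex (a, i) ≤ toLex (b, j)) (hne : j ≠ i) :
    toLex (a, i) < toLex (b, j) :=
  hle.lt_of_ne fun h => hne (congrArg (fun p => (ofLex p).2) h).symm

theorem eventually_toLex_lt_of_eventually_eq_of_tendsto {τ : Type*} [Finite ι] [NoMaxOrder α]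
    {l : Filter τ} {s : Finset ι} {x : τ → ι → α} {M : ι → α} {ℓ : ι} (hℓ : ℓ ∈ s)
    (hmin : ∀ k ∈ s, toLex (M ℓ, ℓ) ≤ toLex (M k, k))
    (hstable : ∀ k ∈ s, ∀ᶠ t in l, x t k = M k)
    (hgrow : ∀ k ∉ s, Tendsto (fun t => x t k) l atTop) :
    ∀ᶠ t in l, ∀ k, k ≠ ℓ → toLex (x t ℓ, ℓ) < toLex (x t k, k) := by
  rw [eventually_all]
  intro k
  by_cases hk : k ∈ s
  · filter_upwards [hstable ℓ hℓ, hstable k hk] with t hxℓ hxk hne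
    rw [hxℓ, hxk]
    exact toLex_lt_of_le_of_ne (hmin k hk) hne
  · filter_upwards [hstable ℓ hℓ, (hgrow k hk).eventually_gt_atTop (M ℓ)] with t hxℓ hxk _
    rw [hxℓ]
    exact Prod.Lex.lt_iff.mpr (Or.inl hxk)

end LexLeader

theorem eventual_leadership_general (n : ℕ)
    (C : Finset (Fin n))
    (PL : Finset (Fin n)) (hPL : PL.Nonempty)
    (c : Fin n → ℕ → Fin n → ℕ) (M : Fin n → ℕ)
    (hbounded : ∀ k ∈ PL, ∀ i ∈ C, ∀ᶠ t in atTop, c i t k = M k)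
    (hunbounded : ∀ k ∉ PL, ∀ i ∈ C, Tendsto (fun t => c i t k) atTop atTop) :
    ∃ ℓ ∈ PL, ∀ᶠ t in atTop, ∀ i ∈ C, ∀ k, k ≠ ℓ →
      toLex ((c i t ℓ, ℓ) : ℕ × Fin n) < toLex ((c i t k, k) : ℕ × Fin n) := by
  obtain ⟨ℓ, hℓ, hmin⟩ := PL.exists_min_image (fun k => toLex (M k, k)) hPL
  refine ⟨ℓ, hℓ, ?_⟩
  rw [eventually_all_finset]
  intro i hi
  exact eventually_toLex_lt_of_eventually_eq_of_tendsto hℓ hmin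
    (fun k hk => hbounded k hk i hi) fun k hk => hunbounded k hk i hi

/-- Eventual leadership from counter behavior (conclusion of Theorem 2,
Closure of the self-stabilizing Ω failure detector). -/
theorem eventual_leadership (n : ℕ) (hn : 1 ≤ n)
    (C : Finset (Fin n)) (hC : C.Nonempty)
    (PL : Finset (Fin n)) (hPL : PL.Nonempty) (hPLC : PL ⊆ C)
    (c : Fin n → ℕ → Fin n → ℕ) (M : Fin n → ℕ)
    (hbounded : ∀ k ∈ PL, ∀ i ∈ C, ∀ᶠ t in atTop, c i t k = M k)
    (hunbounded : ∀ k ∉ PL, ∀ i ∈ C, Tendsto (fun t => c i t k) atTop atTop) :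
    ∃ ℓ ∈ PL, ∀ᶠ t in atTop, ∀ i ∈ C, ∀ k, k ≠ ℓ →
      toLex ((c i t ℓ, ℓ) : ℕ × Fin n) < toLex ((c i t k, k) : ℕ × Fin n) :=
  eventual_leadership_general n C PL hPL c M hbounded hunbounded
end

section
/- δ-inhibition bounds all counters relative to a never-incremented entry (the anti-'counting to infinity' mechanism of the self-stabilizing Ω detector). Let n ≥ 1, δ : ℕ, and let c : ℕ → Fin n → ℕ be a time-indexed counter array such that for every t and every j, either c (t+1) j = c t j, or c (t+1) j = c t j + 1 and c t j < δ + (the minimum of c t k over all k : Fin n) — i.e., an entry may be incremented only while it is below δ plus the current minimum entry. Suppose there exists k₀ : Fin n whose entry is never incremented: c (t+1) k₀ = c t k₀ for all t. Then for every t and every j, c t j ≤ max (c 0 j) (δ + c 0 k₀). -/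
/-- δ-inhibition bounds all counters relative to a never-incremented entry
(the anti-"counting to infinity" mechanism of the self-stabilizing Ω detector). -/
theorem delta_inhibition_bounds (n : ℕ) (hn : 1 ≤ n) (δ : ℕ) (c : ℕ → Fin n → ℕ)
    (hstep : ∀ t j, c (t + 1) j = c t j ∨
      (c (t + 1) j = c t j + 1 ∧
        c t j < δ + Finset.univ.inf' ⟨⟨0, hn⟩, Finset.mem_univ _⟩ (c t)))
    (k₀ : Fin n) (hk₀ : ∀ t, c (t + 1) k₀ = c t k₀) :
    ∀ t j, c t j ≤ max (c 0 j) (δ + c 0 k₀) := by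
  have hconst : ∀ t, c t k₀ = c 0 k₀ := by
    intro t; induction t with
    | zero => rfl
    | succ t ih => rw [hk₀ t, ih]
  intro t
  induction t with
  | zero => intro j; exact le_max_left _ _
  | succ t ih =>
    intro j
    rcases hstep t j with h | ⟨h1, h2⟩
    · rw [h]; exact ih j
    · rw [h1]
      have hmin : Finset.univ.inf' ⟨⟨0, hn⟩, Finset.mem_univ _⟩ (c t) ≤ c t k₀ :=
        Finset.inf'_le _ (Finset.mem_univ k₀)
      have : c t j < δ + c 0 k₀ := lt_of_lt_of_le h2 (by rw [← hconst t]; omega)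
      exact le_max_of_le_right this
end
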